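/- arXiv:2103.08007 — 7 statements merged into one kernel-verified Lean document; each statement's English description precedes it below -/
import Mathlib

section
/- (Collapse regime) If α > 1/4, then for every real β one has β − (α + β)² ≤ 1/4 − α < 0. Consequently, for every β with 1 − α − β > 0 the honest miners' total profit (β − (α + β)²)/(1 − α − β) is strictly negative. -/
/-- Collapse regime: if `α > 1/4`, then for every `β` the numerator
`β - (α + β)^2` is at most `1/4 - α < 0`, and hence for every `β` with
`1 - α - β > 0` the honest miners' total profit `(β - (α+β)^2)/(1-α-β)` is
strictly negative. -/
theorem collapse_regime (α : ℝ) (hα : α > 1/4) :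
    (∀ β : ℝ, β - (α + β)^2 ≤ 1/4 - α) ∧ (1/4 - α < 0) ∧
      (∀ β : ℝ, 1 - α - β > 0 → (β - (α + β)^2) / (1 - α - β) < 0) := by
  have hnum : ∀ β : ℝ, β - (α + β)^2 ≤ 1/4 - α := by
    intro β
    nlinarith [sq_nonneg (α + β - 1/2)]
  refine ⟨hnum, by linarith, fun β hβ => div_neg_of_neg_of_pos (by have := hnum β; linarith) hβ⟩
end

section
/- (Equilibrium regime) If 0 < α ≤ 1/4, then β* = ((1 − 2α) − √(1 − 4α))/2 satisfies 0 ≤ β* < 1 − 2α and β* − (α + β*)² = 0; that is, β* is an equilibrium amount of departed honest hash power at which honest miners break even and the remaining honest hash power 1 − α − β* exceeds the attacker's hash power α. -/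
/-- Equilibrium regime: if `0 < α ≤ 1/4`, then `β* = ((1 - 2α) - √(1 - 4α))/2`
satisfies `0 ≤ β* < 1 - 2α` and `β* - (α + β*)^2 = 0`, i.e. `β*` is an
equilibrium amount of departed honest hash power at which honest miners break
even and the remaining honest hash power `1 - α - β*` exceeds the attacker's
hash power `α`. -/
theorem equilibrium_regime (α : ℝ) (hα0 : 0 < α) (hα : α ≤ 1/4) :
    0 ≤ ((1 - 2*α) - Real.sqrt (1 - 4*α)) / 2 ∧
    ((1 - 2*α) - Real.sqrt (1 - 4*α)) / 2 < 1 - 2*α ∧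
    ((1 - 2*α) - Real.sqrt (1 - 4*α)) / 2
      - (α + ((1 - 2*α) - Real.sqrt (1 - 4*α)) / 2)^2 = 0 := by
  have h4 : (0:ℝ) ≤ 1 - 4*α := by linarith
  have hs0 : 0 ≤ Real.sqrt (1 - 4*α) := Real.sqrt_nonneg _
  have hs2 : Real.sqrt (1 - 4*α) ^ 2 = 1 - 4*α := Real.sq_sqrt h4
  have hle : Real.sqrt (1 - 4*α) ≤ 1 - 2*α := by
    nlinarith [sq_nonneg (Real.sqrt (1 - 4*α) - (1 - 2*α))]
  refine ⟨by linarith, by nlinarith, by nlinarith⟩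
end

section
/- For every α ∈ [0, 1/2] and all γ₁, γ₂ with 0 ≤ γ₁ ≤ γ₂ ≤ 1, one has f(α, γ₂) ≤ f(α, γ₁); i.e., f is pointwise antitone in the network-advantage parameter γ. -/
noncomputable section

/-- Attacker's expected per-block reward (normalized by the block reward) under
Eyal–Sirer selfish mining, numerator. -/
def Na (α γ : ℝ) : ℝ :=
  (-2*α^4 + 5*α^3 - 4*α^2 + α) * γ + 4*α^4 - 9*α^3 + 4*α^2

/-- Honest miners' expected per-block reward (normalized by the block reward)
under Eyal–Sirer selfish mining, numerator. -/
def Nh (α γ : ℝ) : ℝ :=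
  (2*α^4 - 5*α^3 + 4*α^2 - α) * γ - 4*α^4 + 10*α^3 - 6*α^2 - α + 1

/-- Common denominator of the Eyal–Sirer reward expressions. -/
def D (α : ℝ) : ℝ := 2*α^3 - 4*α^2 + 1

/-- Honest miners' share of total effective rewards times `α/(1-α)`; equality
`f α γ = MC/B` characterizes zero honest profit under elastic hash supply. -/
def f (α γ : ℝ) : ℝ := α * Nh α γ / ((1 - α) * (Na α γ + Nh α γ))

/-- `f` is pointwise antitone in the network-advantage parameter `γ`:
for `α ∈ [0, 1/2]` and `0 ≤ γ₁ ≤ γ₂ ≤ 1`, `f(α, γ₂) ≤ f(α, γ₁)`. -/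
theorem f_antitone_in_gamma (α : ℝ) (hα0 : 0 ≤ α) (hα1 : α ≤ 1/2)
    (γ₁ γ₂ : ℝ) (h0 : 0 ≤ γ₁) (h12 : γ₁ ≤ γ₂) (h1 : γ₂ ≤ 1) :
    f α γ₂ ≤ f α γ₁ := by
  have hden : ∀ γ : ℝ, (1 - α) * (Na α γ + Nh α γ)
      = (1 - α) * (α^3 - 2*α^2 - α + 1) := by
    intro γ; unfold Na Nh; ring
  have hCpos : 0 < (1 - α) * (α^3 - 2*α^2 - α + 1) := by
    have h2 : (0:ℝ) < α^3 - 2*α^2 - α + 1 := by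
      nlinarith [mul_nonneg hα0 (by linarith : (0:ℝ) ≤ 1 - 2*α), pow_nonneg hα0 3]
    have h3 : (0:ℝ) < 1 - α := by linarith
    positivity
  have hnum : α * Nh α γ₂ ≤ α * Nh α γ₁ := by
    unfold Nh
    nlinarith [mul_nonneg (mul_nonneg (mul_nonneg (sq_nonneg α) (sq_nonneg (α - 1)))
      (by linarith : (0:ℝ) ≤ 1 - 2*α)) (by linarith : (0:ℝ) ≤ γ₂ - γ₁)]
  unfold f
  rw [hden γ₁, hden γ₂]
  exact (div_le_div_iff_of_pos_right hCpos).mpr hnum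
end
end

section
/- For every γ ∈ [0, 1], the supremum of f(·, γ) over [0, 1/2] is antitone in γ: if 0 ≤ γ₁ ≤ γ₂ ≤ 1 then sup{f(α, γ₂) : α ∈ [0, 1/2]} ≤ sup{f(α, γ₁) : α ∈ [0, 1/2]}. Consequently the collapse threshold M_max(γ) = (B/C)·sup_{α∈[0,1/2]} f(α,γ) is decreasing in γ for any fixed B, C > 0. -/
noncomputable section

lemma denom_eq (α γ : ℝ) : (1 - α) * (Na α γ + Nh α γ) = (1-α)*(α^3 - 2*α^2 - α + 1) := by
  simp only [Na, Nh]; ring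

lemma denom_pos {α : ℝ} (h0 : 0 ≤ α) (h1 : α ≤ 1/2) (γ : ℝ) :
    0 < (1 - α) * (Na α γ + Nh α γ) := by
  rw [denom_eq]
  have h2 : 0 < α^3 - 2*α^2 - α + 1 := by nlinarith [sq_nonneg α, sq_nonneg (1-2*α), sq_nonneg (α*(1-2*α))]
  have : 0 < 1 - α := by linarith
  positivity

lemma f_mono {α γ₁ γ₂ : ℝ} (h0 : 0 ≤ α) (h1 : α ≤ 1/2) (h12 : γ₁ ≤ γ₂) :
    f α γ₂ ≤ f α γ₁ := by
  have d2 := denom_pos h0 h1 γ₂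
  have d1 := denom_pos h0 h1 γ₁
  rw [f, f, denom_eq, denom_eq]
  rw [denom_eq] at d1
  apply (div_le_div_iff_of_pos_right d1).mpr
  simp only [Nh]
  nlinarith [mul_nonneg (mul_nonneg (sq_nonneg (α*(α-1))) (by linarith : (0:ℝ) ≤ 1-2*α)) (sub_nonneg.2 h12)]

/-- The supremum of `f(·, γ)` over `[0, 1/2]` is antitone in `γ ∈ [0,1]`,
and consequently the collapse threshold `M_max(γ) = (B/C)·sup f(·,γ)` is
decreasing in `γ` for any fixed `B, C > 0`. -/
theorem sup_f_antitone (γ₁ γ₂ : ℝ) (h0 : 0 ≤ γ₁) (h12 : γ₁ ≤ γ₂) (h1 : γ₂ ≤ 1) :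
    sSup ((fun α => f α γ₂) '' Set.Icc (0 : ℝ) (1/2))
      ≤ sSup ((fun α => f α γ₁) '' Set.Icc (0 : ℝ) (1/2)) ∧
    ∀ B C : ℝ, 0 < B → 0 < C →
      (B / C) * sSup ((fun α => f α γ₂) '' Set.Icc (0 : ℝ) (1/2))
        ≤ (B / C) * sSup ((fun α => f α γ₁) '' Set.Icc (0 : ℝ) (1/2)) := by
  have hc : ContinuousOn (fun α => f α γ₁) (Set.Icc (0:ℝ) (1/2)) := by
    simp only [f, Na, Nh]
    apply ContinuousOn.div
    · fun_prop
    · fun_prop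
    · intro α hα
      exact (denom_pos hα.1 hα.2 γ₁).ne'
  have hbdd : BddAbove ((fun α => f α γ₁) '' Set.Icc (0 : ℝ) (1/2)) :=
    (isCompact_Icc.image_of_continuousOn hc).bddAbove
  have hmem0 : (0:ℝ) ∈ (fun α => f α γ₁) '' Set.Icc (0 : ℝ) (1/2) := by
    refine ⟨0, ⟨le_refl _, by norm_num⟩, ?_⟩
    simp [f]
  have h0sup : 0 ≤ sSup ((fun α => f α γ₁) '' Set.Icc (0 : ℝ) (1/2)) := le_csSup hbdd hmem0
  have main : sSup ((fun α => f α γ₂) '' Set.Icc (0 : ℝ) (1/2))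
      ≤ sSup ((fun α => f α γ₁) '' Set.Icc (0 : ℝ) (1/2)) := by
    apply Real.sSup_le ?_ h0sup
    rintro x ⟨α, hα, rfl⟩
    exact (f_mono hα.1 hα.2 h12).trans (le_csSup hbdd ⟨α, hα, rfl⟩)
  exact ⟨main, fun B C hB hC => mul_le_mul_of_nonneg_left main (div_pos hB hC).le⟩
end
end

section
/- (Theorem 1) Fix γ ∈ [0, 1] and B, C > 0, and set M_max = (B/C)·sup{f(α, γ) : α ∈ [0, 1/2]}. Then for every M > 0, there exists H > M with f(M/(H + M), γ) = C·M/B if and only if M ≤ M_max. (Here H is the honest miners' total hash rate, M the attacker's hash rate, and f(M/(H+M),γ) = CM/B is the zero-profit condition U^S(H) = 0 for honest miners under Eyal–Sirer selfish mining with elastic hash supply.) -/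
noncomputable section

lemma sum_NaNh (α γ : ℝ) : Na α γ + Nh α γ = α^3 - 2*α^2 - α + 1 := by
  unfold Na Nh; ring

lemma den_pos (γ : ℝ) {α : ℝ} (h0 : 0 ≤ α) (h1 : α ≤ 1/2) :
    0 < (1 - α) * (Na α γ + Nh α γ) := by
  rw [sum_NaNh]
  have h2 : 0 < α^3 - 2*α^2 - α + 1 := by nlinarith [sq_nonneg α, sq_nonneg (α - 1/2), mul_nonneg h0 h0]
  nlinarith

lemma f_cont (γ : ℝ) : ContinuousOn (fun α => f α γ) (Set.Icc (0:ℝ) (1/2)) := by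
  unfold f
  apply ContinuousOn.div
  · apply Continuous.continuousOn; unfold Nh; continuity
  · apply Continuous.continuousOn; unfold Na Nh; continuity
  · intro x hx; exact (den_pos γ hx.1 hx.2).ne'

lemma f_zero (γ : ℝ) : f 0 γ = 0 := by simp [f]

lemma f_half (γ : ℝ) : f (1/2) γ = 0 := by
  have h : Nh (1/2) γ = 0 := by unfold Nh; ring
  unfold f; rw [h]; simp

lemma f_quarter_pos (γ : ℝ) (hγ1 : γ ≤ 1) : 0 < f (1/4) γ := by
  have h1 : Nh (1/4) γ = 33/64 - 9/128*γ := by unfold Nh; ring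
  have h2 : Na (1/4) γ + Nh (1/4) γ = 41/64 := by unfold Na Nh; ring
  unfold f
  rw [h2, h1]
  apply div_pos <;> nlinarith

/-- Theorem 1: for fixed `γ ∈ [0,1]` and `B, C > 0`, with
`M_max = (B/C)·sup{f(α,γ) : α ∈ [0,1/2]}`, an attacker hash rate `M > 0`
admits an equilibrium honest hash rate `H > M` solving the zero-profit
condition `f(M/(H+M), γ) = CM/B` if and only if `M ≤ M_max`. -/
theorem collapse_threshold (γ : ℝ) (hγ0 : 0 ≤ γ) (hγ1 : γ ≤ 1)
    (B C : ℝ) (hB : 0 < B) (hC : 0 < C) (M : ℝ) (hM : 0 < M) :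
    (∃ H : ℝ, H > M ∧ f (M / (H + M)) γ = C * M / B) ↔
      M ≤ (B / C) * sSup ((fun α => f α γ) '' Set.Icc (0 : ℝ) (1/2)) := by
  have hne : (Set.Icc (0:ℝ) (1/2)).Nonempty := ⟨0, by norm_num⟩
  obtain ⟨a, haI, hamax⟩ := isCompact_Icc.exists_isMaxOn hne (f_cont γ)
  have hgreat : IsGreatest ((fun α => f α γ) '' Set.Icc (0:ℝ) (1/2)) (f a γ) :=
    ⟨⟨a, haI, rfl⟩, by rintro _ ⟨x, hx, rfl⟩; exact hamax hx⟩
  have hSval : sSup ((fun α => f α γ) '' Set.Icc (0:ℝ) (1/2)) = f a γ :=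
    hgreat.csSup_eq
  have hbdd : BddAbove ((fun α => f α γ) '' Set.Icc (0:ℝ) (1/2)) := ⟨f a γ, hgreat.2⟩
  have hSpos : 0 < f a γ :=
    lt_of_lt_of_le (f_quarter_pos γ hγ1) (hamax (by constructor <;> norm_num))
  have ha_lt : a < 1/2 := by
    rcases lt_or_eq_of_le haI.2 with h | h
    · exact h
    · rw [h, f_half] at hSpos; linarith
  rw [hSval]
  constructor
  · rintro ⟨H, hH, heq⟩
    have hden : 0 < H + M := by linarith
    have hα0 : 0 ≤ M/(H+M) := (div_pos hM hden).le
    have hα1 : M/(H+M) ≤ 1/2 := by rw [div_le_iff₀ hden]; linarith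
    have hle : C*M/B ≤ f a γ := by
      rw [← heq]; exact hgreat.2 ⟨_, ⟨hα0, hα1⟩, rfl⟩
    rw [div_le_iff₀ hB] at hle
    rw [div_mul_eq_mul_div, le_div_iff₀ hC]
    nlinarith
  · intro hMle
    have hcmb : C*M/B ≤ f a γ := by
      rw [div_mul_eq_mul_div, le_div_iff₀ hC] at hMle
      rw [div_le_iff₀ hB]; nlinarith
    have hcmb0 : 0 < C*M/B := by positivity
    have hsub : Set.Icc (0:ℝ) a ⊆ Set.Icc 0 (1/2) := Set.Icc_subset_Icc le_rfl haI.2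
    have hivt := intermediate_value_Icc haI.1 ((f_cont γ).mono hsub)
    obtain ⟨α, hαI, hαeq⟩ := hivt (by rw [Set.mem_Icc, f_zero]; exact ⟨hcmb0.le, hcmb⟩)
    simp only at hαeq
    have hα0 : 0 < α := by
      rcases lt_or_eq_of_le hαI.1 with h | h
      · exact h
      · exfalso; rw [← h, f_zero] at hαeq; linarith
    have hαhalf : α < 1/2 := lt_of_le_of_lt hαI.2 ha_lt
    refine ⟨M/α - M, ?_, ?_⟩
    · have h2 : 2*M < M/α := by rw [lt_div_iff₀ hα0]; nlinarith
      linarith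
    · have h3 : M/α - M + M = M/α := by ring
      have h4 : M / (M/α) = α := by field_simp
      rw [h3, h4]; exact hαeq
end
end

section
/- Fix γ ∈ [0, 1]. For α ∈ (0, 1/2), the derivative of the map α ↦ f(α, γ) vanishes at α if and only if 4α⁶ − 16α⁵ + 26α³ − 16α² + 1 = γ·(2α⁶ − 8α⁵ − α⁴ + 14α³ − 10α² + 2α). -/
/-! By the quotient rule, the derivative of `f(·, γ) = u / v` with `u = α N_h` and
`v = (1 - α)(N_a + N_h) > 0` vanishes exactly where `u' v - u v'` does, and this polynomial
factors as `(α - 1)²` times the difference of the two sides of the claimed equation. -/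

noncomputable section

theorem deriv_div_eq_zero_iff {u v : ℝ → ℝ} {u' v' x : ℝ} (hu : HasDerivAt u u' x)
    (hv : HasDerivAt v v' x) (hvx : v x ≠ 0) :
    deriv (fun a => u a / v a) x = 0 ↔ u' * v x - u x * v' = 0 := by
  rw [show (fun a => u a / v a) = u / v from rfl, (hu.div hv hvx).deriv, div_eq_zero_iff,
    or_iff_left (pow_ne_zero 2 hvx)]

theorem hasDerivAt_quartic (c₄ c₃ c₂ c₁ c₀ x : ℝ) :
    HasDerivAt (fun a : ℝ => c₄ * a ^ 4 + c₃ * a ^ 3 + c₂ * a ^ 2 + c₁ * a + c₀)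
      (4 * c₄ * x ^ 3 + 3 * c₃ * x ^ 2 + 2 * c₂ * x + c₁) x := by
  refine ((((((hasDerivAt_pow 4 x).const_mul c₄).add ((hasDerivAt_pow 3 x).const_mul c₃)).add
    ((hasDerivAt_pow 2 x).const_mul c₂)).add ((hasDerivAt_id x).const_mul c₁)).add_const
    c₀).congr_deriv ?_
  push_cast
  ring

theorem Na_add_Nh (α γ : ℝ) : Na α γ + Nh α γ = α ^ 3 - 2 * α ^ 2 - α + 1 := by
  unfold Na Nh
  ring

theorem hasDerivAt_Nh (γ α : ℝ) :
    HasDerivAt (fun a => Nh a γ)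
      (4 * (2 * γ - 4) * α ^ 3 + 3 * (10 - 5 * γ) * α ^ 2 + 2 * (4 * γ - 6) * α - (γ + 1))
      α := by
  convert hasDerivAt_quartic (2 * γ - 4) (10 - 5 * γ) (4 * γ - 6) (-(γ + 1)) 1 α using 1
  · funext a
    unfold Nh
    ring
  · ring

theorem hasDerivAt_f_denom (γ α : ℝ) :
    HasDerivAt (fun a => (1 - a) * (Na a γ + Nh a γ))
      (-4 * α ^ 3 + 9 * α ^ 2 - 2 * α - 2) α := by
  convert hasDerivAt_quartic (-1) 3 (-1) (-2) 1 α using 1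
  · funext a
    rw [Na_add_Nh]
    ring
  · ring

theorem f_denom_pos {α : ℝ} (h₀ : 0 ≤ α) (h₁ : α ≤ 1 / 2) (γ : ℝ) :
    0 < (1 - α) * (Na α γ + Nh α γ) := by
  rw [Na_add_Nh]
  have hcubic : 0 < α ^ 3 - 2 * α ^ 2 - α + 1 := by
    nlinarith [sq_nonneg α, sq_nonneg (α - 1 / 2)]
  have hlin : 0 < 1 - α := by linarith
  positivity

theorem deriv_f_eq_zero_iff_general
    (γ : ℝ)
    (α : ℝ) (hα : α ∈ Set.Ioo (0 : ℝ) (1/2)) :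
    deriv (fun a => f a γ) α = 0 ↔
      4*α^6 - 16*α^5 + 26*α^3 - 16*α^2 + 1
        = γ * (2*α^6 - 8*α^5 - α^4 + 14*α^3 - 10*α^2 + 2*α) := by
  obtain ⟨h₀, h₁⟩ := hα
  have hα₁ : (α - 1) ^ 2 ≠ 0 := pow_ne_zero 2 (by linarith)
  unfold f
  rw [deriv_div_eq_zero_iff ((hasDerivAt_id' α).fun_mul (hasDerivAt_Nh γ α))
      (hasDerivAt_f_denom γ α) (f_denom_pos h₀.le h₁.le γ).ne',
    ← sub_eq_zero (b := γ * _), ← mul_eq_zero_iff_left hα₁ (b := _ - γ * _)]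
  apply Iff.of_eq
  congr 1
  unfold Na Nh
  ring

/-- For fixed `γ ∈ [0,1]` and `α ∈ (0, 1/2)`, the derivative of `α ↦ f(α,γ)`
vanishes at `α` iff
`4α⁶ − 16α⁵ + 26α³ − 16α² + 1 = γ(2α⁶ − 8α⁵ − α⁴ + 14α³ − 10α² + 2α)`. -/
theorem deriv_f_eq_zero_iff (γ : ℝ) (hγ0 : 0 ≤ γ) (hγ1 : γ ≤ 1)
    (α : ℝ) (hα : α ∈ Set.Ioo (0 : ℝ) (1/2)) :
    deriv (fun a => f a γ) α = 0 ↔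
      4*α^6 - 16*α^5 + 26*α^3 - 16*α^2 + 1
        = γ * (2*α^6 - 8*α^5 - α^4 + 14*α^3 - 10*α^2 + 2*α) :=
  deriv_f_eq_zero_iff_general γ α hα
end
end

section
/- For γ = 1, the maximum of f(·, 1) over [0, 1/2] lies between 0.29 and 0.30; in particular, f(19/50, 1) > 0.29 and f(α, 1) < 0.30 for every α ∈ [0, 1/2]. Consequently, when the attacking pool's share of total equilibrium hash power B/C exceeds 30% and γ = 1, selfish mining admits no equilibrium with positive honest hash rate and all honest miners leave. -/
noncomputable section

lemma key_poly (α : ℝ) (h0 : 0 ≤ α) (h1 : α ≤ 1/2) :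
    (0:ℝ) < -20*α^4 + 33*α^3 + 4*α^2 - 13*α + 3 := by
  nlinarith [mul_nonneg h0 (sq_nonneg (α-2/5)), mul_nonneg (sub_nonneg.2 h1) (sq_nonneg (α-2/5)),
    sq_nonneg (α-2/5), sq_nonneg (α-1/3), mul_nonneg h0 (sub_nonneg.2 h1),
    mul_nonneg (mul_nonneg h0 (sub_nonneg.2 h1)) (sq_nonneg (α-2/5))]

lemma f_lt (α : ℝ) (h0 : 0 ≤ α) (h1 : α ≤ 1/2) : f α 1 < 0.30 := by
  have hk := key_poly α h0 h1
  have hq : (0:ℝ) < α^3 - 2*α^2 - α + 1 := by nlinarith [sq_nonneg α, mul_nonneg h0 h0]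
  unfold f Na Nh
  have hden : 0 < (1 - α) * (((-2*α^4 + 5*α^3 - 4*α^2 + α) * 1 + 4*α^4 - 9*α^3 + 4*α^2) +
      ((2*α^4 - 5*α^3 + 4*α^2 - α) * 1 - 4*α^4 + 10*α^3 - 6*α^2 - α + 1)) := by
    have h2 : (0:ℝ) < 1 - α := by linarith
    nlinarith [mul_pos h2 hq]
  rw [div_lt_iff₀ hden]
  nlinarith [mul_pos (show (0:ℝ) < 1-α by linarith) hk]

/-- For `γ = 1`, the maximum of `f(·,1)` over `[0,1/2]` lies between `0.29`
and `0.30`: `f(19/50, 1) > 0.29` and `f(α, 1) < 0.30` on `[0,1/2]`.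
Consequently, if the attacker's hash rate exceeds 30% of the total
equilibrium hash power `B/C`, selfish mining with `γ = 1` admits no
equilibrium with positive honest hash rate. -/
theorem gamma_one_threshold :
    f (19/50) 1 > 0.29 ∧
    (∀ α : ℝ, 0 ≤ α → α ≤ 1/2 → f α 1 < 0.30) ∧
    (∀ B C M : ℝ, 0 < B → 0 < C → M > 0.30 * (B / C) →
      ¬ ∃ H : ℝ, H > M ∧ f (M / (H + M)) 1 = C * M / B) := by
  refine ⟨by unfold f Na Nh; norm_num, fun α h0 h1 => f_lt α h0 h1, ?_⟩
  rintro B C M hB hC hM ⟨H, hHM, heq⟩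
  have hM0 : 0 < M := lt_trans (by positivity) hM
  have hHM0 : 0 < H + M := by linarith
  have hα0 : 0 ≤ M / (H + M) := by positivity
  have hα1 : M / (H + M) ≤ 1/2 := by rw [div_le_iff₀ hHM0]; linarith
  have hlt := f_lt _ hα0 hα1
  rw [heq] at hlt
  rw [div_lt_iff₀ hB] at hlt
  have h2 : 0.30 * B < M * C := by
    have := (mul_lt_mul_of_pos_right hM hC)
    rw [mul_comm] at this
    calc 0.30 * B = 0.30 * (B / C) * C := by field_simp
    _ < M * C := by linarith
  nlinarith
end
end
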